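/- arXiv:2304.14262 — 5 statements merged into one kernel-verified Lean document; each statement's English description precedes it below -/
import Mathlib

section
/- Competitiveness via minimal preferred bundles: a price vector p is competitive if and only if there exists a feasible allocation x such that for every buyer j: x i j = b i for all i ∈ Ω'_j(p), ∑_{i∈Ω''_j(p)} x i j = d''_j(p), and x i j = 0 for all i outside Ω'_j(p) ∪ Ω''_j(p). -/
open Finset

section MarketDefs

variable {Ω N : Type*}

/-- A bundle for a buyer with demand `dj`: at most `b i` copies of each object,
at most `dj` items in total. -/
def IsBundle [Fintype Ω] (b : Ω → ℕ) (dj : ℕ) (y : Ω → ℕ) : Prop :=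
  (∀ i, y i ≤ b i) ∧ ∑ i, y i ≤ dj

/-- Utility of bundle `y` at prices `p` for a buyer with per-unit valuations `v`. -/
noncomputable def utility [Fintype Ω] (v : Ω → ℕ) (p : Ω → ℝ) (y : Ω → ℕ) : ℝ :=
  ∑ i, ((v i : ℝ) - p i) * (y i : ℝ)

/-- `y` is a preferred bundle (member of the demand set `D_j(p)`). -/
def InDemand [Fintype Ω] (b : Ω → ℕ) (dj : ℕ) (v : Ω → ℕ) (p : Ω → ℝ) (y : Ω → ℕ) : Prop :=
  IsBundle b dj y ∧ ∀ z, IsBundle b dj z → utility v p z ≤ utility v p y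

/-- Feasible allocation. -/
def Feasible [Fintype Ω] [Fintype N] (b : Ω → ℕ) (d : N → ℕ) (x : Ω → N → ℕ) : Prop :=
  (∀ i, ∑ j, x i j ≤ b i) ∧ ∀ j, ∑ i, x i j ≤ d j

/-- Stable allocation at prices `p`: feasible, and every buyer gets a preferred bundle. -/
def Stable [Fintype Ω] [Fintype N] (b : Ω → ℕ) (d : N → ℕ) (v : Ω → N → ℕ)
    (p : Ω → ℝ) (x : Ω → N → ℕ) : Prop :=
  Feasible b d x ∧ ∀ j, InDemand b (d j) (fun i => v i j) p (fun i => x i j)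

/-- Competitive price vector: nonnegative, and some allocation is stable for it. -/
def Competitive [Fintype Ω] [Fintype N] (b : Ω → ℕ) (d : N → ℕ) (v : Ω → N → ℕ)
    (p : Ω → ℝ) : Prop :=
  (∀ i, 0 ≤ p i) ∧ ∃ x, Stable b d v p x

/-- Walrasian price vector: some stable allocation sells as much as possible. -/
def Walrasian [Fintype Ω] [Fintype N] (b : Ω → ℕ) (d : N → ℕ) (v : Ω → N → ℕ)
    (p : Ω → ℝ) : Prop :=
  (∀ i, 0 ≤ p i) ∧ ∃ x, Stable b d v p x ∧
    ∑ i, ∑ j, x i j = min (∑ i, b i) (∑ j, d j)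

/-- Componentwise minimum Walrasian price vector. -/
def MinWalrasian [Fintype Ω] [Fintype N] (b : Ω → ℕ) (d : N → ℕ) (v : Ω → N → ℕ)
    (p : Ω → ℝ) : Prop :=
  Walrasian b d v p ∧ ∀ q, Walrasian b d v q → ∀ i, p i ≤ q i

end MarketDefs

section TierDefs

variable {Ω N : Type*}

/-- The set `P` of positive payoffs `u i`. -/
noncomputable def posPayoffs [Fintype Ω] (u : Ω → ℝ) : Finset ℝ :=
  (Finset.univ.image u).filter (fun t => 0 < t)

/-- The threshold payoff `θ_j(p)`: the largest positive payoff value `t` such that the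
supply of items with payoff at least `t` covers the demand, if it exists; otherwise the
minimum positive payoff value (and junk value `0` if there is no positive payoff). -/
noncomputable def theta [Fintype Ω] (b : Ω → ℕ) (dj : ℕ) (u : Ω → ℝ) : ℝ :=
  if hQ : ((posPayoffs u).filter
      (fun t => dj ≤ ∑ i ∈ Finset.univ.filter (fun i => t ≤ u i), b i)).Nonempty then
    ((posPayoffs u).filter
      (fun t => dj ≤ ∑ i ∈ Finset.univ.filter (fun i => t ≤ u i), b i)).max' hQ
  else if hP : (posPayoffs u).Nonempty then (posPayoffs u).min' hP
  else 0

/-- `Ω'_j(p)`: objects with payoff strictly above the threshold. -/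
noncomputable def OmegaP [Fintype Ω] (b : Ω → ℕ) (dj : ℕ) (u : Ω → ℝ) : Finset Ω :=
  if dj = 0 ∨ posPayoffs u = ∅ then ∅
  else Finset.univ.filter (fun i => theta b dj u < u i)

/-- `Ω''_j(p)`: objects with payoff equal to the threshold. -/
noncomputable def OmegaPP [Fintype Ω] (b : Ω → ℕ) (dj : ℕ) (u : Ω → ℝ) : Finset Ω :=
  if dj = 0 ∨ posPayoffs u = ∅ then ∅
  else Finset.univ.filter (fun i => u i = theta b dj u)

/-- `Ω'''_j(p)`: objects with payoff zero. -/
noncomputable def OmegaPPP [Fintype Ω] (u : Ω → ℝ) : Finset Ω :=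
  Finset.univ.filter (fun i => u i = 0)

/-- `d'_j(p)`. -/
noncomputable def dPr [Fintype Ω] (b : Ω → ℕ) (dj : ℕ) (u : Ω → ℝ) : ℕ :=
  ∑ i ∈ OmegaP b dj u, b i

/-- `d''_j(p)`. -/
noncomputable def dPPr [Fintype Ω] (b : Ω → ℕ) (dj : ℕ) (u : Ω → ℝ) : ℕ :=
  min (∑ i ∈ OmegaPP b dj u, b i) (dj - dPr b dj u)

/-- Payoff function of buyer `j` at prices `p`. -/
noncomputable def payoff (v : Ω → N → ℕ) (p : Ω → ℝ) (j : N) (i : Ω) : ℝ :=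
  (v i j : ℝ) - p i

/-- `d_p(I)`: total demand that must be served from the item set `I`
(here `a - b` is truncated subtraction on `ℕ`, i.e. `max (0, a - b)`). -/
noncomputable def overDemand [Fintype Ω] [Fintype N] [DecidableEq Ω] (b : Ω → ℕ)
    (d : N → ℕ) (v : Ω → N → ℕ) (p : Ω → ℝ) (I : Finset Ω) : ℕ :=
  ∑ j : N,
    ((∑ i ∈ OmegaP b (d j) (payoff v p j) ∩ I, b i) +
      (dPPr b (d j) (payoff v p j) -
        ∑ i ∈ OmegaPP b (d j) (payoff v p j) \ I, min (b i) (dPPr b (d j) (payoff v p j))))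

end TierDefs

/-!
For a single buyer, choosing a bundle is the linear program: maximise `∑ u i * z i` subject to
`0 ≤ z ≤ b` and `∑ z i ≤ d j`. Its dual has one multiplier `l ≥ 0` for the demand constraint and
value `∑ max (u i - l) 0 * b i + l * d j`, so a bundle is optimal as soon as it meets
complementary slackness for some `l`. For `l = θ` if the supply of payoff at least `θ` covers the
demand and `l = 0` otherwise, complementary slackness says exactly that the bundle takes all of
`Ω'` and `d''` units from `Ω''`, and the bundles of the theorem meet it. Conversely an optimal
bundle does at least as well as such a bundle, hence attains the dual value and meets
complementary slackness; restricting a stable allocation to `Ω' ∪ Ω''` then gives the witness.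
-/

lemma exists_le_sum_eq {ι : Type*} [Fintype ι] [DecidableEq ι] {b : ι → ℕ} (s : Finset ι)
    {m : ℕ} (hm : m ≤ ∑ i ∈ s, b i) : ∃ w ≤ b, ∑ i ∈ s, w i = m := by
  obtain ⟨g, hg, rfl⟩ := Finsupp.exists_le_degree_eq
    (Finsupp.equivFunOnFinite.symm (s.piecewise b 0)) m
    (by simpa [Finsupp.degree_eq_sum, sum_piecewise] using hm)
  have hgs : ∀ i ∉ s, g i = 0 := fun i hi => by simpa [hi] using hg i
  refine ⟨g, fun i => (hg i).trans ?_, ?_⟩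
  · by_cases hi : i ∈ s <;> simp [hi]
  · rw [Finsupp.degree_eq_sum, ← sum_subset (subset_univ s) fun i _ hi => hgs i hi]

section DualBound

variable {Ω : Type*} [Fintype Ω] (b : Ω → ℕ) (dj : ℕ) (u : Ω → ℝ)

/-- Objective of the LP dual of the demand problem `max ∑ u i * z i` over bundles `z`, where
`l ≥ 0` is the multiplier of the demand constraint `∑ z i ≤ dj`. -/
noncomputable def dualBound (l : ℝ) : ℝ :=
  ∑ i, max (u i - l) 0 * b i + l * dj

def ComplementarySlack (l : ℝ) (z : Ω → ℕ) : Prop :=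
  (∀ i, l < u i → z i = b i) ∧ (∀ i, u i < l → z i = 0) ∧ (0 < l → ∑ i, z i = dj)

variable {b dj u}

lemma mul_le_max_zero_mul {a z c : ℝ} (hz : 0 ≤ z) (hzc : z ≤ c) : a * z ≤ max a 0 * c := by
  rcases le_total a 0 with ha | ha
  · rw [max_eq_right ha, zero_mul]
    exact mul_nonpos_of_nonpos_of_nonneg ha hz
  · rw [max_eq_left ha]
    exact mul_le_mul_of_nonneg_left hzc ha

lemma mul_eq_max_zero_mul_iff {a z c : ℝ} :
    a * z = max a 0 * c ↔ (0 < a → z = c) ∧ (a < 0 → z = 0) := by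
  rcases lt_trichotomy a 0 with ha | rfl | ha
  · simp [max_eq_right ha.le, ha, ha.ne, not_lt_of_gt ha]
  · simp
  · simp [max_eq_left ha.le, ha, ha.ne', not_lt_of_gt ha]

lemma sum_mul_eq_sum_sub_mul_add (l : ℝ) (z : Ω → ℕ) :
    ∑ i, u i * (z i : ℝ) = ∑ i, (u i - l) * z i + l * ∑ i, (z i : ℝ) := by
  rw [mul_sum, ← sum_add_distrib]
  exact sum_congr rfl fun i _ => by ring

lemma IsBundle.sub_mul_le {z : Ω → ℕ} (hz : IsBundle b dj z) (l : ℝ) (i : Ω) :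
    (u i - l) * z i ≤ max (u i - l) 0 * b i :=
  mul_le_max_zero_mul (Nat.cast_nonneg _) (Nat.cast_le.2 (hz.1 i))

lemma IsBundle.mul_sum_le {z : Ω → ℕ} (hz : IsBundle b dj z) {l : ℝ} (hl : 0 ≤ l) :
    l * ∑ i, (z i : ℝ) ≤ l * dj :=
  mul_le_mul_of_nonneg_left (mod_cast hz.2) hl

lemma IsBundle.sum_mul_le_dualBound {z : Ω → ℕ} (hz : IsBundle b dj z) {l : ℝ} (hl : 0 ≤ l) :
    ∑ i, u i * (z i : ℝ) ≤ dualBound b dj u l := by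
  rw [sum_mul_eq_sum_sub_mul_add l, dualBound]
  exact add_le_add (sum_le_sum fun i _ => hz.sub_mul_le l i) (hz.mul_sum_le hl)

lemma IsBundle.sum_mul_eq_dualBound_iff {z : Ω → ℕ} (hz : IsBundle b dj z) {l : ℝ}
    (hl : 0 ≤ l) :
    ∑ i, u i * (z i : ℝ) = dualBound b dj u l ↔ ComplementarySlack b dj u l z := by
  rw [sum_mul_eq_sum_sub_mul_add l, dualBound,
    add_eq_add_iff_eq_and_eq (sum_le_sum fun i _ => hz.sub_mul_le l i) (hz.mul_sum_le hl),
    sum_eq_sum_iff_of_le fun i _ => hz.sub_mul_le l i]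
  simp only [mem_univ, true_imp_iff, mul_eq_max_zero_mul_iff, sub_pos, sub_neg, Nat.cast_inj,
    Nat.cast_eq_zero, forall_and, ComplementarySlack, and_assoc]
  refine and_congr_right' (and_congr_right' ?_)
  rcases hl.eq_or_lt with rfl | hl
  · simp
  · rw [mul_right_inj' hl.ne', ← Nat.cast_sum, Nat.cast_inj]
    exact ⟨fun h _ => h, fun h => h hl⟩

end DualBound

section Threshold

variable {Ω : Type*} [Fintype Ω] {b : Ω → ℕ} {dj : ℕ} {u : Ω → ℝ}

lemma mem_posPayoffs {t : ℝ} : t ∈ posPayoffs u ↔ (∃ i, u i = t) ∧ 0 < t := by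
  simp [posPayoffs]

lemma theta_mem_posPayoffs (hP : (posPayoffs u).Nonempty) : theta b dj u ∈ posPayoffs u := by
  unfold theta
  split_ifs with hQ
  · exact mem_of_mem_filter _ (max'_mem _ hQ)
  · exact min'_mem _ hP

lemma theta_pos (hP : (posPayoffs u).Nonempty) : 0 < theta b dj u :=
  (mem_posPayoffs.1 (theta_mem_posPayoffs hP)).2

lemma sum_le_lt_of_theta_lt {t : ℝ} (ht : t ∈ posPayoffs u) (hθt : theta b dj u < t) :
    ∑ i with t ≤ u i, b i < dj := by
  by_contra! hcov
  have hQ : t ∈ (posPayoffs u).filter fun t => dj ≤ ∑ i with t ≤ u i, b i :=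
    mem_filter.2 ⟨ht, hcov⟩
  have : t ≤ theta b dj u := by
    unfold theta
    rw [dif_pos ⟨t, hQ⟩]
    exact le_max' _ t hQ
  linarith

lemma theta_le_of_not_covers (hcov : ¬ dj ≤ ∑ i with theta b dj u ≤ u i, b i) {i : Ω}
    (hi : 0 < u i) : theta b dj u ≤ u i := by
  have hi' : u i ∈ posPayoffs u := mem_posPayoffs.2 ⟨⟨i, rfl⟩, hi⟩
  have hQ : ¬ ((posPayoffs u).filter fun t => dj ≤ ∑ i with t ≤ u i, b i).Nonempty :=
    fun hQ => hcov <| by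
      unfold theta
      rw [dif_pos hQ]
      exact (mem_filter.1 (max'_mem _ hQ)).2
  unfold theta
  rw [dif_neg hQ, dif_pos ⟨_, hi'⟩]
  exact min'_le _ _ hi'

lemma OmegaP_eq_empty (h : dj = 0 ∨ posPayoffs u = ∅) : OmegaP b dj u = ∅ := if_pos h

lemma OmegaPP_eq_empty (h : dj = 0 ∨ posPayoffs u = ∅) : OmegaPP b dj u = ∅ := if_pos h

lemma mem_OmegaP (hd : dj ≠ 0) (hP : (posPayoffs u).Nonempty) {i : Ω} :
    i ∈ OmegaP b dj u ↔ theta b dj u < u i := by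
  simp [OmegaP, hd, hP.ne_empty]

lemma mem_OmegaPP (hd : dj ≠ 0) (hP : (posPayoffs u).Nonempty) {i : Ω} :
    i ∈ OmegaPP b dj u ↔ u i = theta b dj u := by
  simp [OmegaPP, hd, hP.ne_empty]

lemma disjoint_OmegaP_OmegaPP : Disjoint (OmegaP b dj u) (OmegaPP b dj u) := by
  unfold OmegaP OmegaPP
  split_ifs
  · exact disjoint_empty_left _
  · exact disjoint_filter.2 fun i _ h h' => h.ne' h'

lemma dPr_lt (hd : dj ≠ 0) (hP : (posPayoffs u).Nonempty) : dPr b dj u < dj := by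
  rcases (OmegaP b dj u).eq_empty_or_nonempty with hE | hne
  · simp [dPr, hE, Nat.pos_of_ne_zero hd]
  -- the lowest payoff level above `θ` cuts out exactly `Ω'`
  obtain ⟨i₀, hi₀, hmin⟩ := exists_min_image _ u hne
  have hθ : theta b dj u < u i₀ := (mem_OmegaP hd hP).1 hi₀
  have hlevel : (univ.filter fun i => u i₀ ≤ u i) = OmegaP b dj u := by
    ext i
    rw [mem_filter, mem_OmegaP hd hP]
    exact ⟨fun h => hθ.trans_le h.2, fun h => ⟨mem_univ i, hmin i ((mem_OmegaP hd hP).2 h)⟩⟩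
  rw [dPr, ← hlevel]
  exact sum_le_lt_of_theta_lt (mem_posPayoffs.2 ⟨⟨i₀, rfl⟩, (theta_pos hP).trans hθ⟩) hθ

lemma dPr_add_dPPr_le (hd : dj ≠ 0) (hP : (posPayoffs u).Nonempty) :
    dPr b dj u + dPPr b dj u ≤ dj := by
  have := dPr_lt (b := b) hd hP
  unfold dPPr
  omega

/-- An optimal multiplier in `dualBound`: the demand constraint is priced at `θ` when it binds
and is free otherwise. -/
noncomputable def demandMultiplier (b : Ω → ℕ) (dj : ℕ) (u : Ω → ℝ) : ℝ :=
  if dj ≤ ∑ i with theta b dj u ≤ u i, b i then theta b dj u else 0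

lemma demandMultiplier_nonneg (hP : (posPayoffs u).Nonempty) : 0 ≤ demandMultiplier b dj u := by
  unfold demandMultiplier
  split_ifs
  exacts [(theta_pos hP).le, le_rfl]

variable [DecidableEq Ω]

lemma mem_OmegaP_union_OmegaPP (hd : dj ≠ 0) (hP : (posPayoffs u).Nonempty) {i : Ω} :
    i ∈ OmegaP b dj u ∪ OmegaPP b dj u ↔ theta b dj u ≤ u i := by
  rw [mem_union, mem_OmegaP hd hP, mem_OmegaPP hd hP, le_iff_lt_or_eq, eq_comm]

lemma sum_eq_sum_OmegaP_add_sum_OmegaPP {y : Ω → ℕ}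
    (hy : ∀ i, i ∉ OmegaP b dj u ∪ OmegaPP b dj u → y i = 0) :
    ∑ i, y i = ∑ i ∈ OmegaP b dj u, y i + ∑ i ∈ OmegaPP b dj u, y i := by
  rw [← sum_union disjoint_OmegaP_OmegaPP]
  exact (sum_subset (subset_univ _) fun i _ hi => hy i hi).symm

lemma sum_theta_le_eq_dPr_add (hd : dj ≠ 0) (hP : (posPayoffs u).Nonempty) :
    ∑ i with theta b dj u ≤ u i, b i = dPr b dj u + ∑ i ∈ OmegaPP b dj u, b i := by
  rw [dPr, ← sum_union disjoint_OmegaP_OmegaPP]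
  congr 1
  ext i
  rw [mem_filter, mem_OmegaP_union_OmegaPP hd hP]
  simp

lemma dPr_add_dPPr_eq_of_covers (hd : dj ≠ 0) (hP : (posPayoffs u).Nonempty)
    (hcov : dj ≤ ∑ i with theta b dj u ≤ u i, b i) : dPr b dj u + dPPr b dj u = dj := by
  rw [sum_theta_le_eq_dPr_add hd hP] at hcov
  have := dPr_lt (b := b) hd hP
  unfold dPPr
  omega

lemma dPPr_eq_of_not_covers (hd : dj ≠ 0) (hP : (posPayoffs u).Nonempty)
    (hcov : ¬ dj ≤ ∑ i with theta b dj u ≤ u i, b i) :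
    dPPr b dj u = ∑ i ∈ OmegaPP b dj u, b i := by
  rw [sum_theta_le_eq_dPr_add hd hP] at hcov
  unfold dPPr
  omega

end Threshold

section MinimalPreferred

variable {Ω : Type*} [Fintype Ω] [DecidableEq Ω]

def IsMinimalPreferred (b : Ω → ℕ) (dj : ℕ) (u : Ω → ℝ) (y : Ω → ℕ) : Prop :=
  (∀ i ∈ OmegaP b dj u, y i = b i) ∧ ∑ i ∈ OmegaPP b dj u, y i = dPPr b dj u ∧
    ∀ i, i ∉ OmegaP b dj u ∪ OmegaPP b dj u → y i = 0

variable {b : Ω → ℕ} {dj : ℕ} {u : Ω → ℝ} {y : Ω → ℕ}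

lemma isMinimalPreferred_restrict (h₁ : ∀ i ∈ OmegaP b dj u, y i = b i)
    (h₂ : ∑ i ∈ OmegaPP b dj u, y i = dPPr b dj u) :
    IsMinimalPreferred b dj u fun i => if i ∈ OmegaP b dj u ∪ OmegaPP b dj u then y i else 0 :=
  ⟨fun i hi => by simp [hi, h₁ i hi],
    h₂ ▸ sum_congr rfl fun i hi => if_pos (mem_union_right _ hi), fun i hi => if_neg hi⟩

lemma exists_isBundle_isMinimalPreferred (hd : dj ≠ 0) (hP : (posPayoffs u).Nonempty) :
    ∃ y, IsBundle b dj y ∧ IsMinimalPreferred b dj u y := by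
  obtain ⟨w, hwb, hw⟩ :=
    exists_le_sum_eq (b := b) (OmegaPP b dj u) (min_le_left _ (dj - dPr b dj u))
  let y i := if i ∈ OmegaP b dj u then b i else if i ∈ OmegaPP b dj u then w i else 0
  have hy : IsMinimalPreferred b dj u y := by
    refine ⟨fun i hi => if_pos hi, (sum_congr rfl fun i hi => ?_).trans hw, fun i hi => ?_⟩
    · simp [y, hi, disjoint_right.1 disjoint_OmegaP_OmegaPP hi]
    · simp_all [y]
  refine ⟨y, ⟨fun i => ?_, ?_⟩, hy⟩
  · simp only [y]
    split_ifs
    exacts [le_rfl, hwb i, Nat.zero_le _]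
  · rw [sum_eq_sum_OmegaP_add_sum_OmegaPP hy.2.2, sum_congr rfl hy.1, hy.2.1]
    exact dPr_add_dPPr_le hd hP

lemma IsMinimalPreferred.complementarySlack (hd : dj ≠ 0) (hP : (posPayoffs u).Nonempty)
    (hy : IsBundle b dj y) (h : IsMinimalPreferred b dj u y) :
    ComplementarySlack b dj u (demandMultiplier b dj u) y := by
  obtain ⟨hP', hPP, hout⟩ := h
  have hlow : ∀ i, u i < theta b dj u → y i = 0 := fun i hi =>
    hout i fun h => ((mem_OmegaP_union_OmegaPP hd hP).1 h).not_gt hi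
  unfold demandMultiplier
  split_ifs with hcov
  · refine ⟨fun i hi => hP' i ((mem_OmegaP hd hP).2 hi), hlow, fun _ => ?_⟩
    rw [sum_eq_sum_OmegaP_add_sum_OmegaPP hout, sum_congr rfl hP', hPP]
    exact dPr_add_dPPr_eq_of_covers hd hP hcov
  refine ⟨fun i hi => ?_, fun i hi => hlow i (hi.trans (theta_pos hP)), fun h => (h.ne rfl).elim⟩
  rcases (theta_le_of_not_covers hcov hi).lt_or_eq with hlt | heq
  · exact hP' i ((mem_OmegaP hd hP).2 hlt)
  · have hfull : ∑ j ∈ OmegaPP b dj u, y j = ∑ j ∈ OmegaPP b dj u, b j :=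
      hPP.trans (dPPr_eq_of_not_covers hd hP hcov)
    exact (sum_eq_sum_iff_of_le fun j _ => hy.1 j).1 hfull i ((mem_OmegaPP hd hP).2 heq.symm)

lemma ComplementarySlack.eq_on_OmegaP (hd : dj ≠ 0) (hP : (posPayoffs u).Nonempty)
    (h : ComplementarySlack b dj u (demandMultiplier b dj u) y) :
    (∀ i ∈ OmegaP b dj u, y i = b i) ∧ ∑ i ∈ OmegaPP b dj u, y i = dPPr b dj u := by
  unfold demandMultiplier at h
  split_ifs at h with hcov
  · obtain ⟨hhigh, hlow, hsum⟩ := h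
    have hP' : ∀ i ∈ OmegaP b dj u, y i = b i := fun i hi => hhigh i ((mem_OmegaP hd hP).1 hi)
    refine ⟨hP', ?_⟩
    have hsplit := sum_eq_sum_OmegaP_add_sum_OmegaPP (y := y) fun i hi =>
      hlow i (not_le.1 fun h => hi ((mem_OmegaP_union_OmegaPP hd hP).2 h))
    have hdPr : ∑ i ∈ OmegaP b dj u, y i = dPr b dj u := sum_congr rfl hP'
    rw [hsum (theta_pos hP), hdPr] at hsplit
    have := dPr_add_dPPr_eq_of_covers hd hP hcov
    omega
  · have hθ := theta_pos (b := b) (dj := dj) hP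
    have hfull : ∀ i ∈ OmegaP b dj u ∪ OmegaPP b dj u, y i = b i := fun i hi =>
      h.1 i (hθ.trans_le ((mem_OmegaP_union_OmegaPP hd hP).1 hi))
    refine ⟨fun i hi => hfull i (mem_union_left _ hi), ?_⟩
    rw [dPPr_eq_of_not_covers hd hP hcov]
    exact sum_congr rfl fun i hi => hfull i (mem_union_right _ hi)

end MinimalPreferred

section SingleBuyer

variable {Ω : Type*} [Fintype Ω] [DecidableEq Ω] {b : Ω → ℕ} {dj : ℕ} {u : Ω → ℝ}
  {y z : Ω → ℕ}

omit [DecidableEq Ω] in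
lemma IsBundle.sum_mul_nonpos (h : dj = 0 ∨ posPayoffs u = ∅) (hz : IsBundle b dj z) :
    ∑ i, u i * (z i : ℝ) ≤ 0 := by
  rcases h with h | h
  · have hz0 : ∀ i, z i = 0 := by simpa [h] using hz.2
    simp [hz0]
  · refine sum_nonpos fun i _ => mul_nonpos_of_nonpos_of_nonneg (not_lt.1 fun hi => ?_)
      (Nat.cast_nonneg _)
    simpa [h] using mem_posPayoffs.2 ⟨⟨i, rfl⟩, hi⟩

theorem IsMinimalPreferred.sum_mul_le (hy : IsBundle b dj y) (h : IsMinimalPreferred b dj u y)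
    (hz : IsBundle b dj z) : ∑ i, u i * (z i : ℝ) ≤ ∑ i, u i * (y i : ℝ) := by
  by_cases hdeg : dj = 0 ∨ posPayoffs u = ∅
  · have hy0 : ∀ i, y i = 0 := fun i =>
      h.2.2 i (by simp [OmegaP_eq_empty hdeg, OmegaPP_eq_empty hdeg])
    simpa [hy0] using hz.sum_mul_nonpos hdeg
  obtain ⟨hd, hP⟩ := not_or.1 hdeg
  replace hP := nonempty_iff_ne_empty.2 hP
  have hl := demandMultiplier_nonneg (b := b) (dj := dj) hP
  rw [(hy.sum_mul_eq_dualBound_iff hl).2 (h.complementarySlack hd hP hy)]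
  exact hz.sum_mul_le_dualBound hl

theorem IsBundle.eq_on_OmegaP_of_forall_sum_mul_le (hy : IsBundle b dj y)
    (hopt : ∀ z, IsBundle b dj z → ∑ i, u i * (z i : ℝ) ≤ ∑ i, u i * (y i : ℝ)) :
    (∀ i ∈ OmegaP b dj u, y i = b i) ∧ ∑ i ∈ OmegaPP b dj u, y i = dPPr b dj u := by
  by_cases hdeg : dj = 0 ∨ posPayoffs u = ∅
  · simp [OmegaP_eq_empty hdeg, OmegaPP_eq_empty hdeg, dPPr]
  obtain ⟨hd, hP⟩ := not_or.1 hdeg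
  replace hP := nonempty_iff_ne_empty.2 hP
  have hl := demandMultiplier_nonneg (b := b) (dj := dj) hP
  obtain ⟨y₀, hy₀, hmin⟩ := exists_isBundle_isMinimalPreferred hd hP
  have h₀ := (hy₀.sum_mul_eq_dualBound_iff hl).2 (hmin.complementarySlack hd hP hy₀)
  have hval := le_antisymm (hy.sum_mul_le_dualBound hl) (h₀ ▸ hopt y₀ hy₀)
  exact ((hy.sum_mul_eq_dualBound_iff hl).1 hval).eq_on_OmegaP hd hP

end SingleBuyer

section Allocation

variable {Ω N : Type*} [Fintype Ω] [Fintype N] {b : Ω → ℕ} {d : N → ℕ} {x x' : Ω → N → ℕ}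

lemma Feasible.isBundle (hx : Feasible b d x) (j : N) : IsBundle b (d j) fun i => x i j :=
  ⟨fun i => (single_le_sum (fun _ _ => Nat.zero_le _) (mem_univ j)).trans (hx.1 i), hx.2 j⟩

lemma Feasible.mono (hx : Feasible b d x) (hle : ∀ i j, x' i j ≤ x i j) : Feasible b d x' :=
  ⟨fun i => (sum_le_sum fun j _ => hle i j).trans (hx.1 i),
    fun j => (sum_le_sum fun i _ => hle i j).trans (hx.2 j)⟩

end Allocation

/-- competitiveness via minimal preferred bundles. -/
theorem competitive_iff_minimal_preferred_bundles
    {Ω N : Type*} [Fintype Ω] [Fintype N] [DecidableEq Ω]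
    (b : Ω → ℕ) (d : N → ℕ) (v : Ω → N → ℕ)
    (p : Ω → ℝ) (hp : ∀ i, 0 ≤ p i) :
    Competitive b d v p ↔
      ∃ x : Ω → N → ℕ, Feasible b d x ∧ ∀ j,
        (∀ i ∈ OmegaP b (d j) (payoff v p j), x i j = b i) ∧
        (∑ i ∈ OmegaPP b (d j) (payoff v p j), x i j = dPPr b (d j) (payoff v p j)) ∧
        (∀ i, i ∉ OmegaP b (d j) (payoff v p j) ∪ OmegaPP b (d j) (payoff v p j) →
          x i j = 0) := by
  constructor
  · rintro ⟨-, x, hx, hdem⟩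
    refine ⟨fun i j => if i ∈ OmegaP b (d j) (payoff v p j) ∪ OmegaPP b (d j) (payoff v p j)
      then x i j else 0, hx.mono fun i j => ?_, fun j => ?_⟩
    · split_ifs <;> simp
    obtain ⟨h₁, h₂⟩ := (hdem j).1.eq_on_OmegaP_of_forall_sum_mul_le (hdem j).2
    exact isMinimalPreferred_restrict h₁ h₂
  · rintro ⟨x, hx, hmin⟩
    exact ⟨hp, x, hx, fun j =>
      ⟨hx.isBundle j, fun z hz => IsMinimalPreferred.sum_mul_le (hx.isBundle j) (hmin j) hz⟩⟩
end

section
/- Integrality of minimum competitive prices: since all valuations v i j are integers, the componentwise minimum competitive price vector p* (the competitive price vector with p*(i) ≤ q(i) for every object i and every competitive price vector q) takes integer values, i.e. p*(i) ∈ ℕ for every i ∈ Ω. -/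
open Finset

/-!
Let `S` be the set of objects whose price at `p*` is not an integer. As valuations are
integers, at `p*` every object of `S` has a nonzero margin `v i j - p* i`, and this margin
differs from that of every object outside `S`. An exchange argument then shows that no bundle
in a buyer's demand set holds more objects of `S` than the bundle the buyer gets in a stable
allocation `x`. Lowering all prices in `S` by a small `δ > 0` therefore raises the utility of
`x`'s bundles at least as much as that of any other optimal bundle, while the finitely many
strictly worse bundles stay worse. So `x` remains stable, the lowered prices are competitive,
and minimality of `p*` forces `S = ∅`.
-/

open Filter Topology

lemma sub_single_add_single_self {Ω : Type*} [DecidableEq Ω] {y : Ω → ℕ} {i : Ω} (hi : 0 < y i) :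
    y - Pi.single i 1 + Pi.single i 1 = y := by
  ext j
  simp only [Pi.add_apply, Pi.sub_apply, Pi.single_apply]
  split_ifs with h <;> [subst h; skip] <;> omega

section Demand

variable {Ω : Type*} [Fintype Ω] {b : Ω → ℕ} {dj : ℕ} {v : Ω → ℕ} {p : Ω → ℝ} {x y z : Ω → ℕ}

lemma IsBundle.mono (hy : IsBundle b dj y) (hzy : z ≤ y) : IsBundle b dj z :=
  ⟨fun i => (hzy i).trans (hy.1 i), (Finset.sum_le_sum fun i _ => hzy i).trans hy.2⟩

lemma setOf_isBundle_finite (b : Ω → ℕ) (dj : ℕ) : {y | IsBundle b dj y}.Finite :=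
  (Set.Finite.pi fun i => Set.finite_Iic (b i)).subset fun _ hy i _ => hy.1 i

lemma utility_add (v : Ω → ℕ) (p : Ω → ℝ) (y z : Ω → ℕ) :
    utility v p (y + z) = utility v p y + utility v p z := by
  simp only [utility, Pi.add_apply, Nat.cast_add, mul_add, Finset.sum_add_distrib]

variable [DecidableEq Ω]

lemma utility_single (v : Ω → ℕ) (p : Ω → ℝ) (i : Ω) :
    utility v p (Pi.single i 1) = v i - p i := by
  simp [utility, Pi.single_apply]

lemma sum_add_single (y : Ω → ℕ) (i : Ω) :
    ∑ j, (y + Pi.single i 1 : Ω → ℕ) j = ∑ j, y j + 1 := by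
  simp [Finset.sum_add_distrib]

lemma utility_eq_utility_sub_single_add (v : Ω → ℕ) (p : Ω → ℝ) {i : Ω} (hi : 0 < y i) :
    utility v p y = utility v p (y - Pi.single i 1) + (v i - p i) := by
  conv_lhs => rw [← sub_single_add_single_self hi]
  rw [utility_add, utility_single]

lemma IsBundle.add_single (hy : IsBundle b dj y) {i : Ω} (hi : y i < b i) (hsum : ∑ j, y j < dj) :
    IsBundle b dj (y + Pi.single i 1) := by
  refine ⟨fun j => ?_, by rw [sum_add_single]; omega⟩
  have := hy.1 j
  simp only [Pi.add_apply, Pi.single_apply]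
  split_ifs with h <;> [subst h; skip] <;> omega

lemma IsBundle.sub_single_add_single (hy : IsBundle b dj y) {i k : Ω} (hk : 0 < y k)
    (hi : y i < b i) : IsBundle b dj (y - Pi.single k 1 + Pi.single i 1) := by
  have hsum := sum_add_single (y - Pi.single k 1) k
  rw [sub_single_add_single_self hk] at hsum
  refine ⟨fun j => ?_, by rw [sum_add_single]; linarith [hy.2]⟩
  have := hy.1 j
  simp only [Pi.add_apply, Pi.sub_apply, Pi.single_apply]
  split_ifs with h h' <;> subst_vars <;> omega

lemma InDemand.margin_nonneg (hy : InDemand b dj v p y) {i : Ω} (hi : 0 < y i) :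
    0 ≤ (v i : ℝ) - p i := by
  have := hy.2 _ (hy.1.mono tsub_le_self : IsBundle b dj (y - Pi.single i 1))
  rw [utility_eq_utility_sub_single_add v p hi] at this
  linarith

lemma InDemand.sum_eq_of_margin_pos (hy : InDemand b dj v p y) {i : Ω}
    (hc : 0 < (v i : ℝ) - p i) (hi : y i < b i) : ∑ j, y j = dj := by
  by_contra hne
  have := hy.2 _ (hy.1.add_single hi (hy.1.2.lt_of_ne hne))
  rw [utility_add, utility_single] at this
  linarith

lemma InDemand.margin_le_margin (hy : InDemand b dj v p y) {i k : Ω} (hk : 0 < y k)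
    (hi : y i < b i) : (v i : ℝ) - p i ≤ v k - p k := by
  have := hy.2 _ (hy.1.sub_single_add_single hk hi)
  rw [utility_add, utility_single, utility_eq_utility_sub_single_add v p hk] at this
  linarith

theorem InDemand.sum_le_sum_of_margin_ne (hx : InDemand b dj v p x) (hz : InDemand b dj v p z)
    {S : Finset Ω} (hS0 : ∀ i ∈ S, (v i : ℝ) - p i ≠ 0)
    (hS : ∀ i ∈ S, ∀ k ∉ S, (v i : ℝ) - p i ≠ v k - p k) :
    ∑ i ∈ S, z i ≤ ∑ i ∈ S, x i := by
  -- Some `i ∈ S` with `x i < z i` has positive margin, so `x` is full and some `k ∉ S` has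
  -- `z k < x k`; optimality of `x` and of `z` then forces equal margins at `i` and `k`.
  by_contra! hlt
  obtain ⟨i, hiS, hxi⟩ := Finset.exists_lt_of_sum_lt hlt
  have hci : 0 < (v i : ℝ) - p i := (hz.margin_nonneg (by omega)).lt_of_ne' (hS0 i hiS)
  have hxfull := hx.sum_eq_of_margin_pos hci (hxi.trans_le (hz.1.1 i))
  have hcompl : ∑ k ∈ Sᶜ, z k < ∑ k ∈ Sᶜ, x k := by
    have := Finset.sum_add_sum_compl S z
    have := Finset.sum_add_sum_compl S x
    have := hz.1.2
    omega
  obtain ⟨k, hkS, hzk⟩ := Finset.exists_lt_of_sum_lt hcompl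
  exact hS i hiS k (Finset.mem_compl.1 hkS) <| le_antisymm
    (hx.margin_le_margin (by omega) (hxi.trans_le (hz.1.1 i)))
    (hz.margin_le_margin (by omega) (hzk.trans_le (hx.1.1 k)))

def lowerOn (S : Finset Ω) (δ : ℝ) (p : Ω → ℝ) : Ω → ℝ :=
  fun i => if i ∈ S then p i - δ else p i

lemma utility_lowerOn (S : Finset Ω) (δ : ℝ) :
    utility v (lowerOn S δ p) y = utility v p y + δ * ∑ i ∈ S, (y i : ℝ) := by
  have (i : Ω) : ((v i : ℝ) - lowerOn S δ p i) * y i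
      = (v i - p i) * y i + if i ∈ S then δ * y i else 0 := by
    unfold lowerOn
    split_ifs <;> ring
  simp only [utility, this, Finset.sum_add_distrib, Finset.sum_ite_mem, Finset.univ_inter,
    Finset.mul_sum]

lemma InDemand.eventually_lowerOn (hx : InDemand b dj v p x) {S : Finset Ω}
    (hS : ∀ z, InDemand b dj v p z → ∑ i ∈ S, z i ≤ ∑ i ∈ S, x i) :
    ∀ᶠ δ in 𝓝[>] 0, InDemand b dj v (lowerOn S δ p) x := by
  have hbundle : ∀ z ∈ {y | IsBundle b dj y}, ∀ᶠ δ in 𝓝[>] (0 : ℝ),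
      utility v (lowerOn S δ p) z ≤ utility v (lowerOn S δ p) x := by
    intro z hz
    simp only [utility_lowerOn]
    rcases (hx.2 z hz).eq_or_lt with heq | hlt
    · have hzx : ∑ i ∈ S, (z i : ℝ) ≤ ∑ i ∈ S, (x i : ℝ) := by
        exact_mod_cast hS z ⟨hz, fun w hw => (hx.2 w hw).trans heq.ge⟩
      filter_upwards [self_mem_nhdsWithin] with δ (hδ : 0 < δ)
      rw [heq]
      gcongr
    · exact nhdsWithin_le_nhds <| (ContinuousAt.eventually_lt (by fun_prop) (by fun_prop)
        (by simpa using hlt)).mono fun _ => le_of_lt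
  filter_upwards [(setOf_isBundle_finite b dj).eventually_all.2 hbundle] with δ hδ
  exact ⟨hx.1, hδ⟩

lemma eventually_nonneg_lowerOn {S : Finset Ω} (hp : ∀ i, 0 ≤ p i) (hpS : ∀ i ∈ S, 0 < p i) :
    ∀ᶠ δ in 𝓝[>] 0, ∀ i, 0 ≤ lowerOn S δ p i := by
  refine eventually_all.2 fun i => ?_
  by_cases hi : i ∈ S
  · filter_upwards [nhdsWithin_le_nhds (eventually_le_nhds (hpS i hi))] with δ hδ
    simpa [lowerOn, hi] using hδ
  · exact Eventually.of_forall fun δ => by simpa [lowerOn, hi] using hp i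

lemma Stable.eventually_competitive_lowerOn {N : Type*} [Fintype N] {d : N → ℕ}
    {v : Ω → N → ℕ} {x : Ω → N → ℕ} (hx : Stable b d v p x) {S : Finset Ω}
    (hp : ∀ i, 0 ≤ p i) (hpS : ∀ i ∈ S, 0 < p i)
    (hS : ∀ j z, InDemand b (d j) (fun i => v i j) p z → ∑ i ∈ S, z i ≤ ∑ i ∈ S, x i j) :
    ∀ᶠ δ in 𝓝[>] 0, Competitive b d v (lowerOn S δ p) := by
  filter_upwards [eventually_nonneg_lowerOn hp hpS,
    eventually_all.2 fun j => (hx.2 j).eventually_lowerOn (hS j)] with δ hnonneg hdemand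
  exact ⟨hnonneg, x, hx.1, hdemand⟩

end Demand

lemma sub_ne_sub_of_mem_range_intCast {R : Type*} [AddCommGroupWithOne R] {a b p q : R}
    (ha : a ∈ Set.range ((↑) : ℤ → R)) (hb : b ∈ Set.range ((↑) : ℤ → R))
    (hq : q ∈ Set.range ((↑) : ℤ → R)) (hp : p ∉ Set.range ((↑) : ℤ → R)) : a - p ≠ b - q := by
  rintro h
  obtain ⟨a, rfl⟩ := ha
  obtain ⟨b, rfl⟩ := hb
  obtain ⟨q, rfl⟩ := hq
  have : p = a - (b - q) := by rw [← h]; abel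
  exact hp ⟨a - (b - q), by push_cast; exact this.symm⟩

/-- the componentwise minimum competitive price vector is integral. -/
theorem min_competitive_prices_integral
    {Ω N : Type*} [Fintype Ω] [Fintype N]
    (b : Ω → ℕ) (d : N → ℕ) (v : Ω → N → ℕ) (pstar : Ω → ℝ)
    (hcomp : Competitive b d v pstar)
    (hmin : ∀ q : Ω → ℝ, Competitive b d v q → ∀ i, pstar i ≤ q i) :
    ∀ i, ∃ n : ℕ, pstar i = (n : ℝ) := by
  classical
  obtain ⟨hp0, x, hx⟩ := hcomp
  set S : Finset Ω := {i | pstar i ∉ Set.range ((↑) : ℤ → ℝ)} with hSdef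
  have hS (i : Ω) : i ∈ S ↔ pstar i ∉ Set.range ((↑) : ℤ → ℝ) := by simp [hSdef]
  have hnat (n : ℕ) : (n : ℝ) ∈ Set.range ((↑) : ℤ → ℝ) := ⟨n, Int.cast_natCast n⟩
  have hpS : ∀ i ∈ S, 0 < pstar i := fun i hi =>
    (hp0 i).lt_of_ne fun h => (hS i).1 hi ⟨0, by simp [h]⟩
  have hsep : ∀ j z, InDemand b (d j) (fun i => v i j) pstar z →
      ∑ i ∈ S, z i ≤ ∑ i ∈ S, x i j := fun j z hz =>
    (hx.2 j).sum_le_sum_of_margin_ne hz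
      (fun i hi => by
        simpa using sub_ne_sub_of_mem_range_intCast (hnat _) (hnat 0) (hnat 0) ((hS i).1 hi))
      (fun i hi k hk => sub_ne_sub_of_mem_range_intCast (hnat _) (hnat _)
        (of_not_not ((hS k).not.1 hk)) ((hS i).1 hi))
  obtain ⟨δ, hq, hδ : 0 < δ⟩ :=
    ((hx.eventually_competitive_lowerOn hp0 hpS hsep).and self_mem_nhdsWithin).exists
  intro i
  have hiS : i ∉ S := fun hiS => by
    have := hmin _ hq i
    simp only [lowerOn, hiS, if_true] at this
    linarith
  obtain ⟨m, hm⟩ := of_not_not ((hS i).not.1 hiS)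
  lift m to ℕ using (by exact_mod_cast hm ▸ hp0 i)
  exact ⟨m, by simpa using hm.symm⟩
end

section
/- Failure of the duplication method (Example 1): in the market with one buyer (N = {1}) of demand d 1 = 2 and two objects Ω = {α, β} with supplies b α = b β = 1 and valuations v α 1 = 5, v β 1 = 1, the price vector p = (0, 0) together with the allocation assigning one copy of α and one copy of β to the buyer is a Walrasian equilibrium (the allocation is stable for p and sells min(∑ b, ∑ d) = 2 items); consequently p = (0, 0) is a componentwise minimum Walrasian price vector of this instance. -/
open Finset

section SingleBuyer

variable {Ω N : Type*} [Fintype Ω]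

theorem utility_mono_of_le_values {v : Ω → ℕ} {p : Ω → ℝ} (hp : ∀ i, p i ≤ v i)
    {y z : Ω → ℕ} (hzy : ∀ i, z i ≤ y i) : utility v p z ≤ utility v p y :=
  sum_le_sum fun i _ => mul_le_mul_of_nonneg_left (by exact_mod_cast hzy i) (sub_nonneg.2 (hp i))

theorem inDemand_supply_of_le_values {b : Ω → ℕ} {dj : ℕ} {v : Ω → ℕ} {p : Ω → ℝ}
    (hp : ∀ i, p i ≤ v i) (hb : ∑ i, b i ≤ dj) : InDemand b dj v p b :=
  ⟨⟨fun _ => le_rfl, hb⟩, fun _ hz => utility_mono_of_le_values hp hz.1⟩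

theorem stable_supply_of_unique [Unique N] [Fintype N] {b : Ω → ℕ} {d : N → ℕ}
    {v : Ω → N → ℕ} {p : Ω → ℝ} (hp : ∀ i, p i ≤ v i default) (hb : ∑ i, b i ≤ d default) :
    Stable b d v p (fun i _ => b i) := by
  refine ⟨⟨fun i => by simp, fun j => ?_⟩, fun j => ?_⟩ <;> rw [Unique.eq_default j]
  · exact hb
  · exact inDemand_supply_of_le_values hp hb

end SingleBuyer

theorem minWalrasian_zero_of_walrasian {Ω N : Type*} [Fintype Ω] [Fintype N] {b : Ω → ℕ}
    {d : N → ℕ} {v : Ω → N → ℕ} (h : Walrasian b d v fun _ => 0) :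
    MinWalrasian b d v fun _ => 0 :=
  ⟨h, fun _ hq => hq.1⟩

/-- Example 1: one buyer of demand 2; two objects of supply 1 with values
5 and 1. Prices `(0, 0)` with the allocation giving one copy of each object to the buyer
form a Walrasian equilibrium, and `(0, 0)` is a componentwise minimum Walrasian price
vector. -/
theorem duplication_example_buyer_optimal :
    Stable (fun _ => 1 : Fin 2 → ℕ) (fun _ => 2 : Fin 1 → ℕ)
        (![![5], ![1]] : Fin 2 → Fin 1 → ℕ) (fun _ => (0 : ℝ)) (fun _ _ => 1) ∧
      (∑ i : Fin 2, ∑ j : Fin 1, (fun (_ : Fin 2) (_ : Fin 1) => 1 : Fin 2 → Fin 1 → ℕ) i j =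
        min (∑ _i : Fin 2, (1 : ℕ)) (∑ _j : Fin 1, (2 : ℕ))) ∧
      MinWalrasian (fun _ => 1 : Fin 2 → ℕ) (fun _ => 2 : Fin 1 → ℕ)
        (![![5], ![1]] : Fin 2 → Fin 1 → ℕ) (fun _ => (0 : ℝ)) := by
  have hstable : Stable (fun _ => 1 : Fin 2 → ℕ) (fun _ => 2 : Fin 1 → ℕ)
      (![![5], ![1]] : Fin 2 → Fin 1 → ℕ) (fun _ => (0 : ℝ)) (fun _ _ => 1) :=
    stable_supply_of_unique (fun _ => Nat.cast_nonneg _) (by decide)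
  have hsold : ∑ i : Fin 2, ∑ j : Fin 1,
      (fun (_ : Fin 2) (_ : Fin 1) => 1 : Fin 2 → Fin 1 → ℕ) i j =
      min (∑ _i : Fin 2, (1 : ℕ)) (∑ _j : Fin 1, (2 : ℕ)) := by decide
  exact ⟨hstable, hsold, minWalrasian_zero_of_walrasian ⟨fun _ => le_rfl, _, hstable, hsold⟩⟩
end

section
/- Unbounded sensitivity of Walrasian prices: let M ∈ ℕ with M ≥ 1 and consider two buyers N = {1, 2} and two objects Ω = {α, β} with supplies b α = b β = 2 and valuations v i j = M for all i ∈ Ω, j ∈ N. (a) For demands d 1 = d 2 = 2, the zero price vector is Walrasian. (b) For demands d 1 = 3, d 2 = 2, a price vector p is Walrasian if and only if p α = p β = M. Hence increasing one buyer's demand by one unit changes the componentwise minimum Walrasian price of each object from 0 to M. -/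
open Finset

/-!
With demands `(3, 2)` a Walrasian allocation sells all four units, so with `a = M - p α` and
`c = M - p β` the buyers' total utility is `2a + 2c`. Stability bounds it below by the total
utility of any pair of bundles the buyers could choose instead: the pairs `((2,1),(0,2))` and
`((1,2),(2,0))` give `c ≤ 0` and `a ≤ 0`, the empty bundles give `a + c ≥ 0`, so both prices are
`M`. Conversely, at `p = M` every bundle has utility zero, so any allocation selling out is stable.
-/

section Market

variable {Ω N : Type*} [Fintype Ω] [Fintype N]

instance (b : Ω → ℕ) (dj : ℕ) (y : Ω → ℕ) : Decidable (IsBundle b dj y) :=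
  inferInstanceAs (Decidable (_ ∧ _))

instance (b : Ω → ℕ) (d : N → ℕ) (x : Ω → N → ℕ) : Decidable (Feasible b d x) :=
  inferInstanceAs (Decidable (_ ∧ _))

theorem utility_const (m : ℕ) (q : ℝ) (y : Ω → ℕ) :
    utility (fun _ => m) (fun _ => q) y = (m - q) * ∑ i, (y i : ℝ) := by
  simp only [utility, mul_sum]

theorem inDemand_of_sum_eq_demand {b : Ω → ℕ} {dj m : ℕ} {q : ℝ} {y : Ω → ℕ}
    (hq : q ≤ m) (hy : IsBundle b dj y) (hsum : ∑ i, y i = dj) :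
    InDemand b dj (fun _ => m) (fun _ => q) y := by
  refine ⟨hy, fun z hz => ?_⟩
  rw [utility_const, utility_const]
  exact mul_le_mul_of_nonneg_left (by exact_mod_cast hsum ▸ hz.2) (sub_nonneg.2 hq)

theorem inDemand_of_price_eq_value {b : Ω → ℕ} {dj : ℕ} {v : Ω → ℕ} {p : Ω → ℝ} {y : Ω → ℕ}
    (hp : ∀ i, p i = v i) (hy : IsBundle b dj y) : InDemand b dj v p y := by
  refine ⟨hy, fun z _ => ?_⟩
  simp [utility, hp]

theorem stable_of_price_eq_value {b : Ω → ℕ} {d : N → ℕ} {v : Ω → N → ℕ} {p : Ω → ℝ}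
    {x : Ω → N → ℕ} (hp : ∀ i j, p i = v i j) (hx : Feasible b d x) : Stable b d v p x :=
  ⟨hx, fun j => inDemand_of_price_eq_value (fun i => hp i j)
    ⟨fun i => (single_le_sum (fun _ _ => Nat.zero_le _) (mem_univ j)).trans (hx.1 i), hx.2 j⟩⟩

theorem Feasible.sold_out {b : Ω → ℕ} {d : N → ℕ} {x : Ω → N → ℕ} (hx : Feasible b d x)
    (htot : ∑ i, ∑ j, x i j = ∑ i, b i) (i : Ω) : ∑ j, x i j = b i :=
  (sum_eq_sum_iff_of_le fun i _ => hx.1 i).1 htot i (mem_univ i)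

theorem sum_utility_of_sold_out {b : Ω → ℕ} {x : Ω → N → ℕ} (hsold : ∀ i, ∑ j, x i j = b i)
    (w : Ω → ℕ) (p : Ω → ℝ) :
    ∑ j, utility w p (fun i => x i j) = ∑ i, ((w i : ℝ) - p i) * b i := by
  simp only [utility]
  rw [sum_comm]
  refine sum_congr rfl fun i _ => ?_
  rw [← mul_sum, ← hsold i]
  push_cast
  rfl

theorem Stable.sum_utility_le {b : Ω → ℕ} {d : N → ℕ} {v : Ω → N → ℕ} {p : Ω → ℝ}
    {x : Ω → N → ℕ} (hx : Stable b d v p x) (z : N → Ω → ℕ)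
    (hz : ∀ j, IsBundle b (d j) (z j)) :
    ∑ j, utility (fun i => v i j) p (z j) ≤ ∑ j, utility (fun i => v i j) p (fun i => x i j) :=
  sum_le_sum fun j _ => (hx.2 j).2 (z j) (hz j)

end Market

section TwoByTwo

variable (M : ℕ)

theorem walrasian_zero_of_demand_two_two :
    Walrasian (fun _ => 2 : Fin 2 → ℕ) (fun _ => 2 : Fin 2 → ℕ)
      (fun _ _ => M) (fun _ => (0 : ℝ)) :=
  ⟨fun _ => le_rfl, fun _ _ => 1,
    ⟨by decide, fun _ =>
      inDemand_of_sum_eq_demand (dj := 2) (y := fun _ => 1) (Nat.cast_nonneg M) (by decide) rfl⟩,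
    by decide⟩

theorem walrasian_of_eq_demand_three_two {p : Fin 2 → ℝ} (hp : ∀ i, p i = M) :
    Walrasian (fun _ => 2 : Fin 2 → ℕ) (![3, 2] : Fin 2 → ℕ) (fun _ _ => M) p :=
  ⟨fun i => hp i ▸ Nat.cast_nonneg M, ![![2, 0], ![1, 1]],
    stable_of_price_eq_value (fun i _ => hp i) (by decide), by decide⟩

theorem eq_of_walrasian_demand_three_two {p : Fin 2 → ℝ}
    (hp : Walrasian (fun _ => 2 : Fin 2 → ℕ) (![3, 2] : Fin 2 → ℕ) (fun _ _ => M) p)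
    (i : Fin 2) : p i = M := by
  obtain ⟨-, x, hx, htot⟩ := hp
  have hsold := hx.1.sold_out (by simpa using htot)
  have hwelfare (z : Fin 2 → Fin 2 → ℕ) (hz : ∀ j, IsBundle (fun _ => 2) (![3, 2] j) (z j)) :
      ∑ j, utility (fun _ => M) p (z j) ≤ ∑ i, ((M : ℝ) - p i) * 2 := by
    simpa [sum_utility_of_sold_out hsold] using hx.sum_utility_le z hz
  have h₀ := hwelfare 0 (by decide)
  have h₁ := hwelfare ![![2, 1], ![0, 2]] (by decide)
  have h₂ := hwelfare ![![1, 2], ![2, 0]] (by decide)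
  simp only [utility, Fin.sum_univ_two, Matrix.cons_val_zero, Matrix.cons_val_one,
    Pi.zero_apply, Nat.cast_ofNat, Nat.cast_one, Nat.cast_zero] at h₀ h₁ h₂
  have hα : p 0 = M := by linarith
  have hβ : p 1 = M := by linarith
  fin_cases i
  exacts [hα, hβ]

end TwoByTwo

theorem walrasian_prices_unbounded_sensitivity_general (M : ℕ) :
    Walrasian (fun _ => 2 : Fin 2 → ℕ) (fun _ => 2 : Fin 2 → ℕ)
        (fun _ _ => M) (fun _ => (0 : ℝ)) ∧
      ∀ p : Fin 2 → ℝ, (∀ i, 0 ≤ p i) →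
        (Walrasian (fun _ => 2 : Fin 2 → ℕ) (![3, 2] : Fin 2 → ℕ)
            (fun _ _ => M) p ↔ ∀ i, p i = (M : ℝ)) :=
  ⟨walrasian_zero_of_demand_two_two M, fun _ _ =>
    ⟨eq_of_walrasian_demand_three_two M, walrasian_of_eq_demand_three_two M⟩⟩

/-- two buyers, two objects of supply 2, all valuations `M ≥ 1`.
(a) With demands `(2, 2)` the zero price vector is Walrasian.
(b) With demands `(3, 2)` a price vector is Walrasian iff both prices equal `M`. -/
theorem walrasian_prices_unbounded_sensitivity (M : ℕ) (hM : 1 ≤ M) :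
    Walrasian (fun _ => 2 : Fin 2 → ℕ) (fun _ => 2 : Fin 2 → ℕ)
        (fun _ _ => M) (fun _ => (0 : ℝ)) ∧
      ∀ p : Fin 2 → ℝ, (∀ i, 0 ≤ p i) →
        (Walrasian (fun _ => 2 : Fin 2 → ℕ) (![3, 2] : Fin 2 → ℕ)
            (fun _ _ => M) p ↔ ∀ i, p i = (M : ℝ)) :=
  walrasian_prices_unbounded_sensitivity_general M
end

section
/- Per-object prices cannot realize VCG payments: consider the market with objects Ω = {α, β}, supplies b α = 3, b β = 2, buyers N = {1, 2, 3} with demands d 1 = 2, d 2 = 2, d 3 = 1 and valuations v α 1 = 3, v β 1 = 1, v α 2 = 2, v β 2 = 0, v α 3 = 0, v β 3 = 1. Then for every welfare-maximizing feasible allocation x there is no function p : Ω → ℝ such that for every buyer j the payment ∑_{i∈Ω} p(i) · x i j equals the VCG payment of j with respect to x. -/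
open Finset

/-- Welfare of an allocation. -/
def welfare {Ω N : Type*} [Fintype Ω] [Fintype N] (v : Ω → N → ℕ) (x : Ω → N → ℕ) : ℕ :=
  ∑ i, ∑ j, v i j * x i j

/-- `W_{−j}`: the maximum welfare of a feasible allocation in which buyer `j`
receives nothing. -/
noncomputable def welfareWithout {Ω N : Type*} [Fintype Ω] [Fintype N]
    (b : Ω → ℕ) (d : N → ℕ) (v : Ω → N → ℕ) (j : N) : ℕ :=
  sSup {w : ℕ | ∃ z : Ω → N → ℕ, Feasible b d z ∧ (∀ i, z i j = 0) ∧ welfare v z = w}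

/-!
Buyers 1, 2, 3 are the indices 0, 1, 2 and objects α, β the indices 0, 1.
The welfare-maximizing allocations of this market have welfare 9, give buyer 3 its β, and give
α to both buyers 1 and 2; removing buyer 1, 2 or 3 leaves welfare 5, 7 or 8.
Buyer 3's VCG payment is therefore 0, which forces `p β = 0`. In either optimal allocation one of
buyers 1 and 2 then pays 0 while receiving some α, and the other pays 2 for its α alone: this
needs `p α = 0` and `p α ≠ 0` at once.
-/

theorem welfareWithout_eq_welfare {Ω N : Type*} [Fintype Ω] [Fintype N]
    {b : Ω → ℕ} {d : N → ℕ} {v : Ω → N → ℕ} {j : N} {z : Ω → N → ℕ}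
    (hz : Feasible b d z) (hzj : ∀ i, z i j = 0)
    (hmax : ∀ z', Feasible b d z' → (∀ i, z' i j = 0) → welfare v z' ≤ welfare v z) :
    welfareWithout b d v j = welfare v z :=
  IsGreatest.csSup_eq ⟨⟨z, hz, hzj, rfl⟩, by rintro _ ⟨z', hz', hz'j, rfl⟩; exact hmax z' hz' hz'j⟩

namespace VCGExample

abbrev supply : Fin 2 → ℕ := ![3, 2]
abbrev demand : Fin 3 → ℕ := ![2, 2, 1]
abbrev value : Fin 2 → Fin 3 → ℕ := ![![3, 2, 0], ![1, 0, 1]]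

theorem feasible_iff {z : Fin 2 → Fin 3 → ℕ} :
    Feasible supply demand z ↔
      z 0 0 + z 0 1 + z 0 2 ≤ 3 ∧ z 1 0 + z 1 1 + z 1 2 ≤ 2 ∧
        z 0 0 + z 1 0 ≤ 2 ∧ z 0 1 + z 1 1 ≤ 2 ∧ z 0 2 + z 1 2 ≤ 1 := by
  simp [Feasible, Fin.forall_fin_succ, Fin.sum_univ_succ, and_assoc, add_assoc]

theorem welfare_eq (z : Fin 2 → Fin 3 → ℕ) :
    welfare value z = 3 * z 0 0 + 2 * z 0 1 + z 1 0 + z 1 2 := by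
  simp [welfare, Fin.sum_univ_succ, add_assoc]

theorem welfareWithout_eq (j : Fin 3) :
    welfareWithout supply demand value j = ![5, 7, 8] j := by
  have bound : ∀ z, Feasible supply demand z → (∀ i, z i j = 0) →
      welfare value z ≤ ![5, 7, 8] j := by
    intro z hz hzj
    have := hzj 0; have := hzj 1
    rw [feasible_iff] at hz
    rw [welfare_eq]
    fin_cases j <;> simp_all <;> omega
  obtain ⟨z, hz, hzj, hw⟩ : ∃ z, Feasible supply demand z ∧ (∀ i, z i j = 0) ∧
      welfare value z = ![5, 7, 8] j := by
    fin_cases j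
    exacts [⟨![![0, 2, 0], ![0, 0, 1]], feasible_iff.2 (by decide), by decide, rfl⟩,
      ⟨![![2, 0, 0], ![0, 0, 1]], feasible_iff.2 (by decide), by decide, rfl⟩,
      ⟨![![2, 1, 0], ![0, 0, 0]], feasible_iff.2 (by decide), by decide, rfl⟩]
  rw [← hw]
  exact welfareWithout_eq_welfare hz hzj (hw ▸ bound)

theorem welfare_maximal {x : Fin 2 → Fin 3 → ℕ} (hx : Feasible supply demand x)
    (hmax : ∀ z, Feasible supply demand z → welfare value z ≤ welfare value x) :
    welfare value x = 9 ∧ x 0 2 = 0 ∧ x 1 2 = 1 ∧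
      (x 0 0 = 2 ∧ x 1 0 = 0 ∧ x 0 1 = 1 ∨ x 0 0 = 1 ∧ x 1 0 = 1 ∧ x 0 1 = 2) := by
  have h9 : 9 ≤ welfare value x := hmax ![![2, 1, 0], ![0, 0, 1]] (feasible_iff.2 (by decide))
  rw [feasible_iff] at hx
  rw [welfare_eq] at h9 ⊢
  omega

end VCGExample

/-- in the market with objects `{α, β}` (supplies 3, 2), three buyers with
demands 2, 2, 1 and valuations `v α = (3, 2, 0)`, `v β = (1, 0, 1)`, no per-object price
vector realizes the VCG payments of any welfare-maximizing feasible allocation. -/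
theorem no_per_object_vcg_prices :
    ∀ x : Fin 2 → Fin 3 → ℕ,
      Feasible (![3, 2] : Fin 2 → ℕ) (![2, 2, 1] : Fin 3 → ℕ) x →
      (∀ z : Fin 2 → Fin 3 → ℕ,
        Feasible (![3, 2] : Fin 2 → ℕ) (![2, 2, 1] : Fin 3 → ℕ) z →
        welfare (![![3, 2, 0], ![1, 0, 1]] : Fin 2 → Fin 3 → ℕ) z ≤
          welfare (![![3, 2, 0], ![1, 0, 1]] : Fin 2 → Fin 3 → ℕ) x) →
      ¬ ∃ p : Fin 2 → ℝ, ∀ j : Fin 3,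
          (∑ i, p i * (x i j : ℝ)) =
            (welfareWithout (![3, 2] : Fin 2 → ℕ) (![2, 2, 1] : Fin 3 → ℕ)
                (![![3, 2, 0], ![1, 0, 1]] : Fin 2 → Fin 3 → ℕ) j : ℝ) -
              ((welfare (![![3, 2, 0], ![1, 0, 1]] : Fin 2 → Fin 3 → ℕ) x : ℝ) -
                ∑ i, ((![![3, 2, 0], ![1, 0, 1]] : Fin 2 → Fin 3 → ℕ) i j : ℝ) *
                  (x i j : ℝ)) := by
  rintro x hx hmax ⟨p, hp⟩
  obtain ⟨hW, hx02, hx12, hx_opt⟩ := VCGExample.welfare_maximal hx hmax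
  have pay (j : Fin 3) : ∑ i, p i * (x i j : ℝ) =
      (![5, 7, 8] j : ℕ) - 9 + ∑ i, (VCGExample.value i j : ℝ) * x i j := by
    rw [hp j, VCGExample.welfareWithout_eq, hW]
    push_cast
    ring
  have hβ : p 1 = 0 := by
    have pay2 := pay 2
    simp [Fin.sum_univ_two, hx02, hx12] at pay2
    linarith
  have pay0 : p 0 * x 0 0 = 3 * x 0 0 + x 1 0 - 4 := by
    have := pay 0
    simp [Fin.sum_univ_two, hβ] at this
    linarith
  have pay1 : p 0 * x 0 1 = 2 * x 0 1 - 2 := by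
    have := pay 1
    simp [Fin.sum_univ_two, hβ] at this
    linarith
  rcases hx_opt with ⟨hx00, hx10, hx01⟩ | ⟨hx00, hx10, hx01⟩ <;>
    simp only [hx00, hx10, hx01, Nat.cast_ofNat, Nat.cast_one, Nat.cast_zero] at pay0 pay1 <;>
    linarith
end
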